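/- If X is a normal n×n complex matrix and [[A, X],[X*, B]] is positive semidefinite, then the Frobenius norm inequality ‖[[A, X],[X*, B]]‖₂ ≤ ‖A + B‖₂ holds. -/

import Mathlib

open scoped Matrix ComplexOrder

noncomputable section

/-- The numerical range of a matrix. -/
def numRange {m : Type*} [Fintype m] (X : Matrix m m ℂ) : Set ℂ :=
  {z | ∃ v : m → ℂ, star v ⬝ᵥ v = 1 ∧ z = star v ⬝ᵥ X.mulVec v}

/-- The inradius of a subset of the plane: the radius of the largest disc it contains. -/
def inRad (S : Set ℂ) : ℝ := sSup {r : ℝ | ∃ c : ℂ, Metric.closedBall c r ⊆ S}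

/-- The indiameter: the diameter of the largest disc contained in the set. -/
def inDiam (S : Set ℂ) : ℝ := 2 * inRad S

/-- The numerical range of the compression of `X` to the subspace `S`. -/
def nrOn {m : Type*} [Fintype m] (X : Matrix m m ℂ) (S : Submodule ℂ (m → ℂ)) : Set ℂ :=
  {z | ∃ v ∈ S, star v ⬝ᵥ v = 1 ∧ z = star v ⬝ᵥ X.mulVec v}

/-- The elliptical width `δ₂(X)`: the supremum of the indiameters of the numerical
ranges of compressions of `X` to two-dimensional subspaces. -/
def ellWidth {m : Type*} [Fintype m] (X : Matrix m m ℂ) : ℝ :=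
  sSup {d | ∃ S : Submodule ℂ (m → ℂ), Module.finrank ℂ S = 2 ∧ d = inDiam (nrOn X S)}

/-- The operator (spectral) norm of a matrix. -/
def opNorm {m : Type*} [Fintype m] [DecidableEq m] (M : Matrix m m ℂ) : ℝ :=
  ‖Matrix.toEuclideanCLM (𝕜 := ℂ) M‖

/-- The Frobenius (Hilbert–Schmidt) norm of a matrix. -/
def frobNorm {m : Type*} [Fintype m] (M : Matrix m m ℂ) : ℝ :=
  Real.sqrt ((Matrix.trace (Mᴴ * M)).re)

/-- Eigenvalues of a Hermitian matrix in decreasing order (junk value `0` otherwise):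
`eigDesc M k` is the `(k+1)`-th largest eigenvalue of `M`. -/
def eigDesc {m : ℕ} (M : Matrix (Fin m) (Fin m) ℂ) (k : Fin m) : ℝ :=
  if h : M.IsHermitian then (h.eigenvalues ∘ Tuple.sort h.eigenvalues) k.rev else 0

/-- The absolute value `|X| = (XᴴX)^(1/2)` of a matrix. -/
def matAbs {m : Type*} [Fintype m] [DecidableEq m] (X : Matrix m m ℂ) : Matrix m m ℂ :=
  (Matrix.posSemidef_conjTranspose_mul_self X).1.eigenvectorUnitary.1 *
    Matrix.diagonal ((↑) ∘ (√·) ∘ (Matrix.posSemidef_conjTranspose_mul_self X).1.eigenvalues) *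
    (star (Matrix.posSemidef_conjTranspose_mul_self X).1.eigenvectorUnitary : Matrix m m ℂ)

/-- The `2n × 2n` block matrix `[[A, X],[Xᴴ, B]]`, reindexed by `Fin (n+n)`. -/
def blockR {n : ℕ} (A X B : Matrix (Fin n) (Fin n) ℂ) :
    Matrix (Fin (n + n)) (Fin (n + n)) ℂ :=
  (Matrix.fromBlocks A X Xᴴ B).submatrix finSumFinEquiv.symm finSumFinEquiv.symm

/-- The operator norm distance from `X` to the scalar matrices. -/
def distScalar {m : Type*} [Fintype m] [DecidableEq m] (X : Matrix m m ℂ) : ℝ :=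
  ⨅ a : ℂ, opNorm (X - a • 1)

/-- Apply a real function to a Hermitian matrix by the functional calculus
(junk value `0` if the matrix is not Hermitian). -/
def hermApply {m : Type*} [Fintype m] [DecidableEq m] (f : ℝ → ℝ) (M : Matrix m m ℂ) :
    Matrix m m ℂ :=
  if h : M.IsHermitian then h.cfc f else 0

end

/-!
Expanding both Frobenius norms, the claim reduces to `Re tr (X Xᴴ) ≤ Re tr (A B)`. Perturb `B` to
be positive definite and pass to an eigenbasis of `B`, where `B = diag d` and `X` becomes a normal
matrix `Y`. The Schur complement `A - Y D⁻¹ Yᴴ ≥ 0` gives `Re tr (A B) ≥ ∑ (d j / d k) |Y j k|²`.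
Normality says that the weights `|Y j k|²` have equal row and column sums, so summing
`1 + log (d j) - log (d k) ≤ d j / d k` against them makes the logarithms cancel, leaving
`∑ |Y j k|² = tr (X Xᴴ)`.
-/

open Filter Topology

theorem sum_sum_le_sum_sum_div_mul_of_balanced {ι : Type*} [Fintype ι] {b : ι → ℝ}
    (hb : ∀ i, 0 < b i) {c : ι → ι → ℝ} (hc : ∀ i j, 0 ≤ c i j)
    (hbal : ∀ j, ∑ k, c j k = ∑ k, c k j) :
    ∑ j, ∑ k, c j k ≤ ∑ j, ∑ k, b j / b k * c j k := by
  have hlog : ∑ j, ∑ k, Real.log (b j) * c j k = ∑ j, ∑ k, Real.log (b k) * c j k := by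
    calc _ = ∑ j, Real.log (b j) * ∑ k, c k j := by simp_rw [← hbal, Finset.mul_sum]
      _ = _ := by simp_rw [Finset.mul_sum]; exact Finset.sum_comm
  calc ∑ j, ∑ k, c j k
      = ∑ j, ∑ k, (1 + (Real.log (b j) - Real.log (b k))) * c j k := by
        simp only [add_mul, sub_mul, one_mul, Finset.sum_add_distrib, Finset.sum_sub_distrib,
          hlog, sub_self, add_zero]
    _ ≤ ∑ j, ∑ k, b j / b k * c j k := by
        refine Finset.sum_le_sum fun j _ => Finset.sum_le_sum fun k _ => ?_
        refine mul_le_mul_of_nonneg_right ?_ (hc j k)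
        rw [← Real.log_div (hb j).ne' (hb k).ne']
        linarith [Real.log_le_sub_one_of_pos (div_pos (hb j) (hb k))]

namespace Matrix

variable {n : Type*} [Fintype n]

theorem trace_fromBlocks {R : Type*} [AddCommMonoid R] {m : Type*} [Fintype m]
    (A : Matrix n n R) (B : Matrix n m R) (C : Matrix m n R) (D : Matrix m m R) :
    (fromBlocks A B C D).trace = A.trace + D.trace := by
  simp [trace, Fintype.sum_sum_type]

theorem re_trace_mul_conjTranspose (Y : Matrix n n ℂ) :
    (Y * Yᴴ).trace.re = ∑ j, ∑ k, Complex.normSq (Y j k) := by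
  simp [trace, mul_apply, Complex.mul_conj]

theorem sum_normSq_row_eq_sum_normSq_col {Y : Matrix n n ℂ} (hY : Y * Yᴴ = Yᴴ * Y) (j : n) :
    ∑ k, Complex.normSq (Y j k) = ∑ k, Complex.normSq (Y k j) := by
  have h := congrArg Complex.re (congrFun (congrFun hY j) j)
  simpa [mul_apply, Complex.mul_conj, mul_comm (star (Y _ j)), Complex.normSq_apply] using h

variable [DecidableEq n]

theorem re_trace_mul_diagonal_inv_mul_conjTranspose_mul_diagonal (Y : Matrix n n ℂ) (d : n → ℝ) :
    (Y * diagonal (fun k => ((d k)⁻¹ : ℂ)) * Yᴴ * diagonal (fun j => (d j : ℂ))).trace.re =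
      ∑ j, ∑ k, d j / d k * Complex.normSq (Y j k) := by
  rw [trace, Complex.re_sum]
  refine Finset.sum_congr rfl fun j _ => ?_
  rw [diag_apply, mul_diagonal, mul_apply, Finset.sum_mul, Complex.re_sum]
  refine Finset.sum_congr rfl fun k _ => ?_
  rw [mul_diagonal, conjTranspose_apply, RCLike.star_def, mul_right_comm _ _ (starRingEnd ℂ _),
    Complex.mul_conj]
  simp only [← Complex.ofReal_inv, ← Complex.ofReal_mul, Complex.ofReal_re]
  ring

theorem PosSemidef.re_trace_mul_diagonal_nonneg {T : Matrix n n ℂ} (hT : T.PosSemidef)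
    {d : n → ℝ} (hd : ∀ i, 0 ≤ d i) : 0 ≤ (T * diagonal (fun j => (d j : ℂ))).trace.re := by
  simp only [trace, diag_apply, mul_diagonal, Complex.re_sum]
  exact Finset.sum_nonneg fun j _ => by
    simpa using mul_nonneg (Complex.nonneg_iff.mp hT.diag_nonneg).1 (hd j)

theorem re_trace_mul_conjTranspose_le_of_fromBlocks_diagonal {A Y : Matrix n n ℂ} {d : n → ℝ}
    (hd : ∀ i, 0 < d i) (hY : Y * Yᴴ = Yᴴ * Y)
    (hP : (fromBlocks A Y Yᴴ (diagonal fun j => (d j : ℂ))).PosSemidef) :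
    (Y * Yᴴ).trace.re ≤ (A * diagonal fun j => (d j : ℂ)).trace.re := by
  have hD : (diagonal fun j => (d j : ℂ)).PosDef :=
    PosDef.diagonal fun j => Complex.zero_lt_real.mpr (hd j)
  have := hD.isUnit.invertible
  have hinv : (diagonal fun j => (d j : ℂ))⁻¹ = diagonal fun k => ((d k)⁻¹ : ℂ) := by
    refine inv_eq_right_inv ?_
    rw [diagonal_mul_diagonal, ← diagonal_one]
    exact congrArg diagonal <| funext fun j =>
      mul_inv_cancel₀ (Complex.ofReal_ne_zero.mpr (hd j).ne')
  have hSchur := (PosDef.fromBlocks₂₂ A Y hD).mp hP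
  rw [hinv] at hSchur
  have hnonneg := hSchur.re_trace_mul_diagonal_nonneg fun j => (hd j).le
  rw [sub_mul, trace_sub, Complex.sub_re,
    re_trace_mul_diagonal_inv_mul_conjTranspose_mul_diagonal] at hnonneg
  calc (Y * Yᴴ).trace.re = ∑ j, ∑ k, Complex.normSq (Y j k) := re_trace_mul_conjTranspose Y
    _ ≤ ∑ j, ∑ k, d j / d k * Complex.normSq (Y j k) :=
      sum_sum_le_sum_sum_div_mul_of_balanced hd (fun _ _ => Complex.normSq_nonneg _)
        (sum_normSq_row_eq_sum_normSq_col hY)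
    _ ≤ (A * diagonal fun j => (d j : ℂ)).trace.re := by linarith

theorem trace_conjStarAlgAut {R : Type*} [CommRing R] [StarRing R] (U : unitary (Matrix n n R))
    (M : Matrix n n R) : (Unitary.conjStarAlgAut R _ U M).trace = M.trace := by
  rw [Unitary.conjStarAlgAut_apply, trace_mul_cycle, Unitary.coe_star_mul_self, one_mul]

theorem PosSemidef.fromBlocks_mul_mul_conjTranspose {R : Type*} [Ring R] [PartialOrder R]
    [StarRing R] {A X B : Matrix n n R} (hP : (fromBlocks A X Xᴴ B).PosSemidef) (U : Matrix n n R) :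
    (fromBlocks (U * A * Uᴴ) (U * X * Uᴴ) (U * X * Uᴴ)ᴴ (U * B * Uᴴ)).PosSemidef := by
  convert hP.mul_mul_conjTranspose_same (fromBlocks U 0 0 U) using 1
  simp [fromBlocks_multiply, fromBlocks_conjTranspose, mul_assoc]

theorem re_trace_mul_conjTranspose_le_of_posDef {A X B : Matrix n n ℂ} (hX : X * Xᴴ = Xᴴ * X)
    (hB : B.PosDef) (hP : (fromBlocks A X Xᴴ B).PosSemidef) :
    (X * Xᴴ).trace.re ≤ (A * B).trace.re := by
  set φ := Unitary.conjStarAlgAut ℂ (Matrix n n ℂ) (star hB.1.eigenvectorUnitary)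
  have hφB : φ B = diagonal fun j => (hB.1.eigenvalues j : ℂ) :=
    hB.1.conjStarAlgAut_star_eigenvectorUnitary
  have hφX : φ X * (φ X)ᴴ = (φ X)ᴴ * φ X := by
    rw [← star_eq_conjTranspose, ← map_star, ← map_mul, ← map_mul, star_eq_conjTranspose, hX]
  have hφP : (fromBlocks (φ A) (φ X) (φ X)ᴴ (φ B)).PosSemidef :=
    hP.fromBlocks_mul_mul_conjTranspose _
  rw [hφB] at hφP
  have key := re_trace_mul_conjTranspose_le_of_fromBlocks_diagonal hB.eigenvalues_pos hφX hφP
  rwa [← hφB, ← star_eq_conjTranspose, ← map_star, ← map_mul, ← map_mul, trace_conjStarAlgAut,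
    trace_conjStarAlgAut, star_eq_conjTranspose] at key

theorem re_trace_mul_conjTranspose_le_of_posSemidef {A X B : Matrix n n ℂ}
    (hX : X * Xᴴ = Xᴴ * X) (hP : (fromBlocks A X Xᴴ B).PosSemidef) :
    (X * Xᴴ).trace.re ≤ (A * B).trace.re := by
  have hB : B.PosSemidef := hP.submatrix Sum.inr
  have hperturbed : ∀ ε : ℝ, 0 < ε → (X * Xᴴ).trace.re ≤ (A * B).trace.re + ε * A.trace.re := by
    intro ε hε
    have hεI : ((ε : ℂ) • (1 : Matrix n n ℂ)).PosDef :=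
      PosDef.one.smul (Complex.zero_lt_real.mpr hε)
    have hPε : (fromBlocks A X Xᴴ (B + (ε : ℂ) • 1)).PosSemidef := by
      have hsplit : fromBlocks A X Xᴴ (B + (ε : ℂ) • 1) =
          fromBlocks A X Xᴴ B + diagonal (Sum.elim 0 fun _ => (ε : ℂ)) := by
        rw [← fromBlocks_diagonal, fromBlocks_add]
        simp [smul_one_eq_diagonal]
      rw [hsplit]
      exact hP.add (PosSemidef.diagonal fun i => by cases i <;> simp [hε.le])
    have := re_trace_mul_conjTranspose_le_of_posDef hX (PosDef.posSemidef_add hB hεI) hPε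
    simpa [mul_add, trace_add] using this
  have hlim : Tendsto (fun ε : ℝ => (A * B).trace.re + ε * A.trace.re) (𝓝[>] 0)
      (𝓝 (A * B).trace.re) := by
    have hcont : Continuous fun ε : ℝ => (A * B).trace.re + ε * A.trace.re := by fun_prop
    simpa using (hcont.tendsto 0).mono_left nhdsWithin_le_nhds
  exact ge_of_tendsto hlim (eventually_nhdsWithin_of_forall hperturbed)

end Matrix

/-- If `X` is normal and `[[A,X],[Xᴴ,B]]` is positive semidefinite, then
`‖[[A,X],[Xᴴ,B]]‖₂ ≤ ‖A + B‖₂` in the Frobenius norm. -/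
theorem stmt10 {n : ℕ} (A B X : Matrix (Fin n) (Fin n) ℂ)
    (hP : (Matrix.fromBlocks A X Xᴴ B).PosSemidef)
    (hX : X * Xᴴ = Xᴴ * X) :
    frobNorm (Matrix.fromBlocks A X Xᴴ B) ≤ frobNorm (A + B) := by
  have hA : A.PosSemidef := hP.submatrix Sum.inl
  have hB : B.PosSemidef := hP.submatrix Sum.inr
  have key := Matrix.re_trace_mul_conjTranspose_le_of_posSemidef hX hP
  unfold frobNorm
  apply Real.sqrt_le_sqrt
  rw [hP.1.eq, Matrix.conjTranspose_add, hA.1.eq, hB.1.eq, Matrix.fromBlocks_multiply,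
    Matrix.trace_fromBlocks]
  simp only [add_mul, mul_add, Matrix.trace_add, Complex.add_re, Matrix.trace_mul_comm B A,
    Matrix.trace_mul_comm Xᴴ X]
  linarith
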